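/- arXiv:2206.06861 — 2 statements merged into one kernel-verified Lean document; each statement's English description precedes it below -/
import Mathlib

section
/- Let A, B be polynomials over ℂ, let z₁, …, zₙ be pairwise distinct complex numbers with B(zⱼ) ≠ 0 for every j, and set P(X) = ∏_{j=1}^n (X − zⱼ). If the Stieltjes–Bethe equations hold, i.e. for every j = 1, …, n, Σ_{ℓ ≠ j} 1/(zⱼ − z_ℓ) = A(zⱼ)/(2·B(zⱼ)), then P divides B·P'' − A·P': there exists a polynomial Q over ℂ with B·P'' − A·P' = Q·P, and moreover deg Q ≤ d − 1 where d = max(deg A, deg B − 1). -/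
/-!
At a zero `zⱼ` of `P` write `P = (X - zⱼ) R`. Then `P'(zⱼ) = R(zⱼ)`, `P''(zⱼ) = 2 R'(zⱼ)` and
`R'(zⱼ) / R(zⱼ) = ∑_{ℓ ≠ j} 1 / (zⱼ - z_ℓ)`, so the Stieltjes–Bethe equation at `zⱼ` says exactly
that `B P'' - A P'` vanishes at `zⱼ`. The zeros of `P` are simple, hence `P ∣ B P'' - A P'`;
the quotient has degree `< d` because `deg (B P'' - A P') < d + deg P`.
-/

open Polynomial Finset

namespace Polynomial

section CommRing

variable {R : Type*} [CommRing R]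

theorem eval_derivative_X_sub_C_mul (a : R) (p : R[X]) :
    eval a (derivative ((X - C a) * p)) = eval a p := by
  simp [derivative_mul]

theorem eval_derivative_derivative_X_sub_C_mul (a : R) (p : R[X]) :
    eval a (derivative (derivative ((X - C a) * p))) = 2 * eval a (derivative p) := by
  simp [derivative_mul, two_mul]

end CommRing

theorem eval_derivative_prod_X_sub_C {K ι : Type*} [Field K] (s : Finset ι)
    (z : ι → K) {a : K} (ha : ∀ i ∈ s, a ≠ z i) :
    eval a (derivative (∏ i ∈ s, (X - C (z i)))) =
      eval a (∏ i ∈ s, (X - C (z i))) * ∑ i ∈ s, 1 / (a - z i) := by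
  classical
  rw [derivative_prod_finset, eval_finsetSum, mul_sum]
  refine sum_congr rfl fun i hi => ?_
  have hai : a - z i ≠ 0 := sub_ne_zero.mpr (ha i hi)
  rw [← mul_prod_erase s _ hi, derivative_X_sub_C, mul_one, eval_mul]
  simp only [eval_sub, eval_X, eval_C]
  field_simp

theorem degree_mul_derivative_lt {R : Type*} [Semiring R] {A : R[X]} {m : ℕ}
    (hA : A.natDegree ≤ m) (P : R[X]) : (A * derivative P).degree < ↑(m + P.natDegree) := by
  by_cases h : A * derivative P = 0
  · simp [h]
  have hP : P.natDegree ≠ 0 := fun h0 => h (by simp [derivative_of_natDegree_zero h0])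
  refine (natDegree_lt_iff_degree_lt h).mp ?_
  have := natDegree_derivative_lt hP
  have := natDegree_mul_le (p := A) (q := derivative P)
  omega

theorem degree_lt_of_degree_mul_lt {R : Type*} [Semiring R] [NoZeroDivisors R] {p q : R[X]}
    {d : ℕ} (hq : q ≠ 0) (h : (p * q).degree < ↑(d + q.natDegree)) : p.degree < d := by
  by_cases hp : p = 0
  · simp [hp]
  rw [← natDegree_lt_iff_degree_lt (mul_ne_zero hp hq), natDegree_mul hp hq] at h
  exact (natDegree_lt_iff_degree_lt hp).mp (by omega)

theorem degree_mul_derivative_derivative_sub_mul_derivative_lt {R : Type*} [Ring R]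
    (A B P : R[X]) :
    (B * derivative (derivative P) - A * derivative P).degree <
      ↑(max A.natDegree (B.natDegree - 1) + P.natDegree) := by
  refine (degree_sub_le _ _).trans_lt (max_lt ?_ (degree_mul_derivative_lt (le_max_left _ _) P))
  by_cases hP : P.natDegree = 0
  · simp [derivative_of_natDegree_zero hP]
  have hB : B.natDegree ≤ max A.natDegree (B.natDegree - 1) + 1 := by omega
  refine (degree_mul_derivative_lt hB (derivative P)).trans_le ?_
  have := natDegree_derivative_lt hP
  exact_mod_cast (by omega)

theorem isRoot_of_stieltjes_bethe {K ι : Type*} [Field K] [NeZero (2 : K)] [Fintype ι]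
    [DecidableEq ι] (A B : K[X]) {z : ι → K} (hz : Function.Injective z) {j : ι}
    (hB : B.eval (z j) ≠ 0)
    (hSB : ∑ ℓ ∈ univ.erase j, 1 / (z j - z ℓ) = A.eval (z j) / (2 * B.eval (z j))) :
    (B * derivative (derivative (∏ i, (X - C (z i)))) -
      A * derivative (∏ i, (X - C (z i)))).IsRoot (z j) := by
  have hne : ∀ ℓ ∈ univ.erase j, z j ≠ z ℓ := fun ℓ hℓ h => ne_of_mem_erase hℓ (hz h).symm
  rw [← mul_prod_erase univ _ (mem_univ j)]
  simp only [IsRoot, eval_sub, eval_mul, eval_derivative_X_sub_C_mul,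
    eval_derivative_derivative_X_sub_C_mul, eval_derivative_prod_X_sub_C _ _ hne, hSB]
  field_simp
  ring

theorem prod_X_sub_C_dvd_of_isRoot {K ι : Type*} [Field K] [Fintype ι] {z : ι → K}
    (hz : Function.Injective z) {p : K[X]} (hp : ∀ j, p.IsRoot (z j)) :
    ∏ j, (X - C (z j)) ∣ p :=
  prod_dvd_of_coprime ((pairwise_coprime_X_sub_C hz).set_pairwise _)
    fun j _ => dvd_iff_isRoot.mpr (hp j)

end Polynomial

/-- If pairwise distinct points `zⱼ` (not roots of `B`) satisfy the
Stieltjes–Bethe equations for `(A, B)`, then `P = ∏ (X - zⱼ)` divides `B·P'' − A·P'`,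
with quotient `Q` of degree ≤ d − 1 (i.e. `deg Q < d`), where
`d = max (deg A) (deg B − 1)`. -/
theorem heine_stieltjes_of_stieltjes_bethe
    (A B : Polynomial ℂ) (n : ℕ) (z : Fin n → ℂ)
    (hz : Function.Injective z) (hB : ∀ j, B.eval (z j) ≠ 0)
    (P : Polynomial ℂ) (hP : P = ∏ j, (X - C (z j)))
    (hSB : ∀ j, ∑ ℓ ∈ univ.erase j, 1 / (z j - z ℓ) = A.eval (z j) / (2 * B.eval (z j))) :
    ∃ Q : Polynomial ℂ,
      B * derivative (derivative P) - A * derivative P = Q * P ∧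
      Q.degree < ((max A.natDegree (B.natDegree - 1) : ℕ) : WithBot ℕ) := by
  subst hP
  obtain ⟨Q, hQ⟩ := prod_X_sub_C_dvd_of_isRoot hz
    fun j => isRoot_of_stieltjes_bethe A B hz (hB j) (hSB j)
  rw [mul_comm _ Q] at hQ
  have hdeg := degree_mul_derivative_derivative_sub_mul_derivative_lt A B (∏ j, (X - C (z j)))
  rw [hQ] at hdeg
  have hP0 : ∏ j, (X - C (z j)) ≠ 0 :=
    (monic_prod_of_monic _ _ fun j _ => monic_X_sub_C _).ne_zero
  exact ⟨Q, hQ, degree_lt_of_degree_mul_lt hP0 hdeg⟩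
end

section
/- Let μ : ℕ → ℂ be a sequence of moments, let M : ℂ[X] → ℂ be the linear functional with M[X^j] = μ_j for all j, and let P_n(X) be the determinant of the (n+1)×(n+1) matrix whose rows with index 0 ≤ i ≤ n−1 are (μ_i, μ_{i+1}, …, μ_{i+n}) and whose last row is (1, X, …, X^n). Then for every m ∈ ℕ, M[P_n·X^m] equals the determinant of the (n+1)×(n+1) matrix whose rows with index 0 ≤ i ≤ n−1 are (μ_i, μ_{i+1}, …, μ_{i+n}) and whose last row is (μ_m, μ_{m+1}, …, μ_{m+n}). In particular M[P_n·X^m] = 0 for every m ≤ n−1. -/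
open Polynomial Matrix

/-!
The determinant is linear in its last row, with the cofactors of that row as coefficients. For
`P_n · X^m` these cofactors are constants (minors of the Hankel matrix `(μ_{i+j})`) and the last
row is `(X^{m+j})_j`, so `M` can be moved into the last row, where it turns `X^{m+j}` into
`μ_{m+j}`. For `m < n` that row repeats row `m`, and the determinant vanishes.
-/

namespace Matrix

variable {ι R S : Type*} [Fintype ι] [DecidableEq ι] [CommRing R]

theorem det_updateRow_eq_sum_mul_adjugate (A : Matrix ι ι R) (i : ι) (b : ι → R) :
    (A.updateRow i b).det = ∑ j, b j * adjugate A j i := by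
  rw [← cramer_transpose_apply, cramer_eq_adjugate_mulVec, ← adjugate_transpose, mulVec,
    dotProduct]
  simp only [transpose_apply, mul_comm]

theorem map_det_updateRow_map_algebraMap [CommRing S] [Algebra R S] (L : S →ₗ[R] R)
    (B : Matrix ι ι R) (i : ι) (v : ι → S) :
    L (updateRow (B.map (algebraMap R S)) i v).det = (updateRow B i fun j => L (v j)).det := by
  rw [det_updateRow_eq_sum_mul_adjugate, det_updateRow_eq_sum_mul_adjugate,
    ← RingHom.mapMatrix_apply, ← RingHom.map_adjugate, map_sum]
  refine Finset.sum_congr rfl fun j _ => ?_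
  rw [RingHom.mapMatrix_apply, map_apply, ← Algebra.commutes, ← Algebra.smul_def, L.map_smul,
    smul_eq_mul, mul_comm]

theorem updateRow_last_eq_of_ite {α : Type*} {n : ℕ} (A : Matrix (Fin (n + 1)) (Fin (n + 1)) α)
    (b : Fin (n + 1) → α) :
    A.updateRow (Fin.last n) b =
      of fun i j : Fin (n + 1) => if (i : ℕ) < n then A i j else b j := by
  ext i j
  rw [updateRow_apply, of_apply]
  by_cases hi : i = Fin.last n
  · simp [hi]
  · exact (if_neg hi).trans (if_pos (Fin.lt_last_iff_ne_last.2 hi)).symm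

def hankel (μ : ℕ → R) (n : ℕ) : Matrix (Fin n) (Fin n) R :=
  of fun i j => μ (i + j)

theorem det_hankel_updateRow_last_shift_eq_zero (μ : ℕ → R) {n m : ℕ} (hm : m < n) :
    ((hankel μ (n + 1)).updateRow (Fin.last n) fun j => μ (m + j)).det = 0 := by
  have hm_ne : (⟨m, hm.trans n.lt_succ_self⟩ : Fin (n + 1)) ≠ Fin.last n := Fin.ne_of_lt hm
  refine det_zero_of_row_eq hm_ne ?_
  rw [updateRow_self, updateRow_ne hm_ne]
  rfl

end Matrix

/-- For the moment functional `M` (with `M[X^j] = μ_j`) and the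
determinantal polynomial `P_n`, one has
`M[P_n·X^m] = det` of the `(n+1)×(n+1)` matrix with rows `(μ_i, …, μ_{i+n})` for
`i < n` and last row `(μ_m, …, μ_{m+n})`; in particular `M[P_n·X^m] = 0` for
`m ≤ n − 1`. -/
theorem moment_functional_det_polynomial
    (μ : ℕ → ℂ) (n : ℕ)
    (M : Polynomial ℂ →ₗ[ℂ] ℂ) (hM : ∀ j : ℕ, M (X ^ j) = μ j)
    (P : Polynomial ℂ)
    (hP : P = (Matrix.of fun i j : Fin (n + 1) =>
      if (i : ℕ) < n then (C (μ ((i : ℕ) + (j : ℕ))) : Polynomial ℂ)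
      else X ^ (j : ℕ)).det) :
    ∀ m : ℕ,
      M (P * X ^ m) =
        (Matrix.of fun i j : Fin (n + 1) =>
          if (i : ℕ) < n then μ ((i : ℕ) + (j : ℕ)) else μ (m + (j : ℕ))).det ∧
      (m < n → M (P * X ^ m) = 0) := by
  intro m
  have hP_hankel :
      P = (((hankel μ (n + 1)).map C).updateRow (Fin.last n) fun j => X ^ (j : ℕ)).det := by
    rw [hP, updateRow_last_eq_of_ite]
    rfl
  have hPX : P * X ^ m =
      (((hankel μ (n + 1)).map C).updateRow (Fin.last n) fun j => X ^ (m + j : ℕ)).det := by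
    rw [hP_hankel, mul_comm, ← det_updateRow_smul]
    congr 2
    ext j
    simp [pow_add]
  have hMPX :
      M (P * X ^ m) = ((hankel μ (n + 1)).updateRow (Fin.last n) fun j => μ (m + j)).det := by
    rw [hPX, ← algebraMap_eq, map_det_updateRow_map_algebraMap]
    simp only [hM]
  refine ⟨hMPX.trans (by rw [updateRow_last_eq_of_ite]; rfl), fun hm => ?_⟩
  rw [hMPX, det_hankel_updateRow_last_shift_eq_zero μ hm]
end
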